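/- Let T be a rooted weighted tree, μ,ν probability functions on its vertices, ξ = μ − ν, and Ξ(x) = Σ_{y ⪰ x} ξ(y). If μ(x) ≥ [Ξ(x)]⁺ + Σ_{u child of x}[Ξ(u)]⁻ for all x, then the coupling γ* defined by γ*(x,x⁺) = [Ξ(x)]⁺, γ*(x⁺,x) = [Ξ(x)]⁻, γ*(x,x) = μ(x) − [Ξ(x)]⁺ − Σ_{u child of x}[Ξ(u)]⁻, and γ* = 0 otherwise, is a coupling of (μ,ν) with transport cost Σ d(x,y)γ*(x,y) = Σ_{x≠x₀} d(x,x⁺)|Ξ(x)|, which is the Kantorovich distance d(μ,ν). -/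

import Mathlib

/-- Length of a path (list of vertices) in a weighted graph. -/
noncomputable def pathLen {X : Type*} (w : X → X → ℝ) : List X → ℝ
  | [] => 0
  | [_] => 0
  | a :: b :: l => w a b + pathLen w (b :: l)

/-- `l` is a walk from `x` to `y` along edges of the weighted graph `w`. -/
def IsWalk {X : Type*} (w : X → X → ℝ) (x y : X) (l : List X) : Prop :=
  l.head? = some x ∧ l.getLast? = some y ∧ l.Chain' (fun a b => 0 < w a b)

/-- The shortest-path distance induced by the weighted graph `w`. -/
noncomputable def gdist {X : Type*} (w : X → X → ℝ) (x y : X) : ℝ :=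
  sInf {r | ∃ l, IsWalk w x y l ∧ r = pathLen w l}

/-- A finite rooted weighted tree, encoded by a parent map: every vertex reaches
the root by iterating `parent`, and `wt x` is the weight of the edge `{x, parent x}`. -/
structure WRootedTree (X : Type*) where
  root : X
  parent : X → X
  wt : X → ℝ
  parent_root : parent root = root
  reach : ∀ x, ∃ n, parent^[n] x = root
  wt_pos : ∀ x, x ≠ root → 0 < wt x

/-- The weight function of the graph underlying a rooted tree. -/
noncomputable def treeW {X : Type*} [DecidableEq X] (T : WRootedTree X) : X → X → ℝ :=
  fun a b =>
    if a ≠ b ∧ T.parent a = b then T.wt a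
    else if a ≠ b ∧ T.parent b = a then T.wt b
    else 0

/-- The tree metric: the shortest-path distance of the underlying weighted graph. -/
noncomputable def tdist {X : Type*} [DecidableEq X] (T : WRootedTree X) : X → X → ℝ :=
  gdist (treeW T)

/-- `x ⪯ y` in the tree order: `x` lies on the path from the root to `y`. -/
def treeLE {X : Type*} (T : WRootedTree X) (x y : X) : Prop :=
  ∃ n, T.parent^[n] y = x

/-- Cumulative function `Ξ(x) = ∑_{y ⪰ x} ξ(y)`, the sum of `ξ` over descendants of `x`. -/
noncomputable def cumul {X : Type*} [Fintype X] (T : WRootedTree X) (ξ : X → ℝ) (x : X) : ℝ :=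
  ∑ y, Set.indicator {y | treeLE T x y} ξ y

set_option linter.unusedSectionVars false
set_option maxHeartbeats 1000000
namespace WRootedTree

variable {X : Type*} (T : WRootedTree X)

lemma iter_root (n : ℕ) : T.parent^[n] T.root = T.root :=
  Function.iterate_fixed T.parent_root n

lemma eq_root_of_periodic {x : X} {m : ℕ} (hm : 0 < m) (h : T.parent^[m] x = x) :
    x = T.root := by
  obtain ⟨k, hk⟩ := T.reach x
  have h2 : ∀ j, T.parent^[m * j] x = x := by
    intro j
    induction j with
    | zero => simp
    | succ j ih =>
      rw [Nat.mul_succ, Function.iterate_add_apply, h, ih]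
  have hle : k ≤ m * k := Nat.le_mul_of_pos_left k hm
  calc x = T.parent^[m * k] x := (h2 k).symm
    _ = T.parent^[m * k - k] (T.parent^[k] x) := by
        rw [← Function.iterate_add_apply, Nat.sub_add_cancel hle]
    _ = T.root := by rw [hk, iter_root]

lemma parent_eq_iff {x : X} : T.parent x = x ↔ x = T.root := by
  constructor
  · intro h; exact T.eq_root_of_periodic Nat.one_pos (by simpa using h)
  · rintro rfl; exact T.parent_root

lemma treeLE_refl (x : X) : treeLE T x x := ⟨0, rfl⟩

lemma treeLE_trans {x y z : X} (h1 : treeLE T x y) (h2 : treeLE T y z) :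
    treeLE T x z := by
  obtain ⟨m, hm⟩ := h1; obtain ⟨n, hn⟩ := h2
  exact ⟨m + n, by rw [Function.iterate_add_apply, hn, hm]⟩

lemma treeLE_antisymm {x y : X} (h1 : treeLE T x y) (h2 : treeLE T y x) :
    x = y := by
  obtain ⟨m, hm⟩ := h1; obtain ⟨n, hn⟩ := h2
  rcases Nat.eq_zero_or_pos (m + n) with h | h
  · obtain ⟨rfl, rfl⟩ := Nat.add_eq_zero.mp h
    simp only [Function.iterate_zero, id] at hm; exact hm.symm
  · have hx : T.parent^[m + n] x = x := by
      rw [Function.iterate_add_apply, hn, hm]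
    have := T.eq_root_of_periodic h hx
    subst this
    rw [iter_root] at hn; exact hn

lemma treeLE_root (y : X) : treeLE T T.root y := T.reach y

lemma treeLE_of_parent {x u : X} (h : treeLE T x (T.parent u)) : treeLE T x u := by
  obtain ⟨n, hn⟩ := h
  exact ⟨n + 1, by rwa [Function.iterate_succ_apply]⟩

lemma treeLE_parent_of_ne {x y : X} (h : treeLE T x y) (hne : x ≠ y) :
    treeLE T x (T.parent y) := by
  obtain ⟨n, hn⟩ := h
  cases n with
  | zero => exact absurd hn.symm hne
  | succ k => exact ⟨k, by rwa [Function.iterate_succ_apply] at hn⟩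

lemma not_treeLE_parent {x : X} (hx : x ≠ T.root) : ¬ treeLE T x (T.parent x) := by
  rintro ⟨n, hn⟩
  exact hx (T.eq_root_of_periodic (Nat.succ_pos n)
    (by rwa [Function.iterate_succ_apply]))

lemma treeLE_parent_self {c : X} : treeLE T (T.parent c) c := ⟨1, rfl⟩

lemma child_ne_root {c x : X} (hp : T.parent c = x) (hne : c ≠ x) : c ≠ T.root := by
  rintro rfl; exact hne (by rw [← hp, T.parent_root])


end WRootedTree
namespace WRootedTree

variable {X : Type*} (T : WRootedTree X)


variable [Fintype X] [DecidableEq X]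

open Classical Finset in
lemma cumul_eq_sum (ξ : X → ℝ) (x : X) :
    cumul T ξ x = ∑ y ∈ univ.filter (fun y => treeLE T x y), ξ y := by
  rw [cumul, sum_filter]
  refine Finset.sum_congr rfl fun y _ => ?_
  rw [Set.indicator_apply]
  simp only [Set.mem_setOf_eq]

open Classical Finset in
lemma desc_eq (x : X) :
    univ.filter (fun y => treeLE T x y) =
      insert x ((univ.filter (fun c => T.parent c = x ∧ c ≠ x)).biUnion
        (fun c => univ.filter (fun y => treeLE T c y))) := by
  ext y
  simp only [mem_filter, mem_univ, true_and, mem_insert, mem_biUnion]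
  constructor
  · intro h
    by_cases hyx : y = x
    · exact Or.inl hyx
    · right
      have hex : ∃ n, T.parent^[n] y = x := h
      have hspec := Nat.find_spec hex
      have hn0 : Nat.find hex ≠ 0 := by
        intro h0
        rw [h0] at hspec; exact hyx hspec
      obtain ⟨k, hk⟩ := Nat.exists_eq_succ_of_ne_zero hn0
      refine ⟨T.parent^[k] y, ⟨⟨?_, ?_⟩, ⟨k, rfl⟩⟩⟩
      · have : T.parent^[k + 1] y = x := by rw [← Nat.succ_eq_add_one, ← hk]; exact hspec
        rwa [Function.iterate_succ_apply'] at this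
      · intro hc
        exact Nat.find_min hex (show k < Nat.find hex by omega) hc
  · rintro (rfl | ⟨c, ⟨⟨hpc, hcx⟩, hcy⟩⟩)
    · exact T.treeLE_refl _
    · exact T.treeLE_trans ⟨1, by simpa using hpc⟩ hcy

open Classical Finset in
lemma cumul_eq (ξ : X → ℝ) (x : X) :
    cumul T ξ x = ξ x + ∑ c ∈ univ.filter (fun c => T.parent c = x ∧ c ≠ x),
      cumul T ξ c := by
  have hxd : x ∉ (univ.filter (fun c => T.parent c = x ∧ c ≠ x)).biUnion
      (fun c => univ.filter (fun y => treeLE T c y)) := by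
    simp only [mem_biUnion, mem_filter, mem_univ, true_and, not_exists]
    rintro c ⟨⟨hpc, hcx⟩, hcy⟩
    exact hcx (T.treeLE_antisymm hcy ⟨1, by simpa using hpc⟩)
  have hdisj : ∀ c1 ∈ univ.filter (fun c => T.parent c = x ∧ c ≠ x),
      ∀ c2 ∈ univ.filter (fun c => T.parent c = x ∧ c ≠ x), c1 ≠ c2 →
      Disjoint (univ.filter (fun y => treeLE T c1 y))
        (univ.filter (fun y => treeLE T c2 y)) := by
    intro c1 h1 c2 h2 hne
    simp only [mem_filter, mem_univ, true_and] at h1 h2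
    rw [Finset.disjoint_left]
    intro y hy1 hy2
    simp only [mem_filter, mem_univ, true_and] at hy1 hy2
    obtain ⟨m, hm⟩ := hy1
    obtain ⟨n, hn⟩ := hy2
    -- wlog m ≤ n
    have key : ∀ c1 c2 : X, T.parent c1 = x → c1 ≠ x → T.parent c2 = x → c2 ≠ x →
        c1 ≠ c2 → ∀ m n : ℕ, m ≤ n → T.parent^[m] y = c1 → T.parent^[n] y = c2 → False := by
      intro c1 c2 hp1 hx1 hp2 hx2 hne m n hmn hm hn
      have h1 : T.parent^[n - m] c1 = c2 := by
        rw [← hm, ← Function.iterate_add_apply]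
        rw [Nat.sub_add_cancel hmn, hn]
      rcases Nat.eq_zero_or_pos (n - m) with h0 | hpos
      · rw [h0] at h1; exact hne (by simpa using h1)
      · obtain ⟨k, hk⟩ := Nat.exists_eq_succ_of_ne_zero (Nat.pos_iff_ne_zero.mp hpos)
        have : T.parent^[k] x = c2 := by
          rw [← hp1, ← Function.iterate_succ_apply, ← hk, h1]
        have hle : treeLE T c2 x := ⟨k, this⟩
        have hge : treeLE T x c2 := ⟨1, by simpa using hp2⟩
        exact hx2 (T.treeLE_antisymm hle hge)
    rcases le_total m n with h | h
    · exact key c1 c2 h1.1 h1.2 h2.1 h2.2 hne m n h hm hn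
    · exact key c2 c1 h2.1 h2.2 h1.1 h1.2 hne.symm n m h hn hm
  rw [cumul_eq_sum, desc_eq, sum_insert hxd, sum_biUnion hdisj]
  congr 1
  exact Finset.sum_congr rfl fun c _ => (cumul_eq_sum T ξ c).symm

open Classical Finset in
lemma cumul_root (ξ : X → ℝ) : cumul T ξ T.root = ∑ y, ξ y := by
  rw [cumul_eq_sum]
  congr 1
  rw [Finset.filter_true_of_mem]
  intro y _; exact T.treeLE_root y


end WRootedTree
namespace WRootedTree

variable {X : Type*} (T : WRootedTree X)


variable [DecidableEq X]

lemma no_two_cycle {a b : X} (hab : a ≠ b) (h1 : T.parent a = b) : T.parent b ≠ a := by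
  intro h2
  have : T.parent^[2] a = a := by
    simp [Function.iterate_succ_apply, h1, h2]
  exact hab (by rw [T.eq_root_of_periodic (by norm_num) this, ← T.parent_root,
    ← T.eq_root_of_periodic (by norm_num) this, h1])

lemma treeW_parent {x : X} (hx : x ≠ T.root) : treeW T x (T.parent x) = T.wt x := by
  have hne : x ≠ T.parent x := fun h => hx ((T.parent_eq_iff).mp h.symm)
  simp [treeW, hne]

lemma treeW_parent' {x : X} (hx : x ≠ T.root) : treeW T (T.parent x) x = T.wt x := by
  have hne : x ≠ T.parent x := fun h => hx ((T.parent_eq_iff).mp h.symm)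
  have h2 := T.no_two_cycle hne rfl
  simp [treeW, hne.symm, h2, hne]

lemma treeW_symm (a b : X) : treeW T a b = treeW T b a := by
  unfold treeW
  by_cases hab : a = b
  · simp [hab]
  · by_cases h1 : T.parent a = b
    · have h2 := T.no_two_cycle hab h1
      simp [hab, Ne.symm hab, h1, h2]
    · by_cases h2 : T.parent b = a
      · have h3 := T.no_two_cycle (Ne.symm hab) h2
        simp [hab, Ne.symm hab, h1, h2, h3]
      · simp [hab, Ne.symm hab, h1, h2]

lemma treeW_nonneg (a b : X) : 0 ≤ treeW T a b := by
  unfold treeW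
  split_ifs with h1 h2
  · refine le_of_lt (T.wt_pos a fun hr => h1.1 ?_)
    subst hr; rw [← h1.2, T.parent_root]
  · refine le_of_lt (T.wt_pos b fun hr => h2.1 ?_)
    subst hr; rw [← h2.2, T.parent_root]
  · exact le_rfl


end WRootedTree
namespace WRootedTree

variable {X : Type*} (T : WRootedTree X) [DecidableEq X] [Fintype X]

open Classical in
noncomputable def ind (x y : X) : ℝ := if treeLE T x y then 1 else 0

open Finset in
noncomputable def pot (a b : X) : ℝ :=
  ∑ x ∈ univ.filter (· ≠ T.root), T.wt x * |T.ind x a - T.ind x b|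

lemma ind_nonneg (x y : X) : 0 ≤ T.ind x y := by
  unfold ind; split_ifs <;> norm_num

lemma pot_symm (a b : X) : T.pot a b = T.pot b a := by
  unfold pot; exact Finset.sum_congr rfl fun x _ => by rw [abs_sub_comm]

lemma pot_self (a : X) : T.pot a a = 0 := by
  unfold pot; simp

lemma pot_nonneg (a b : X) : 0 ≤ T.pot a b := by
  refine Finset.sum_nonneg fun x hx => ?_
  simp only [Finset.mem_filter, Finset.mem_univ, true_and] at hx
  exact mul_nonneg (le_of_lt (T.wt_pos x hx)) (abs_nonneg _)

lemma pot_triangle (a b c : X) : T.pot a c ≤ T.pot a b + T.pot b c := by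
  unfold pot
  rw [← Finset.sum_add_distrib]
  refine Finset.sum_le_sum fun x hx => ?_
  simp only [Finset.mem_filter, Finset.mem_univ, true_and] at hx
  rw [← mul_add]
  refine mul_le_mul_of_nonneg_left ?_ (le_of_lt (T.wt_pos x hx))
  exact abs_sub_le _ _ _

lemma ind_one {x y : X} (h : treeLE T x y) : T.ind x y = 1 := by
  unfold ind; simp [h]

lemma ind_zero {x y : X} (h : ¬ treeLE T x y) : T.ind x y = 0 := by
  unfold ind; simp [h]

lemma pot_edge {x : X} (hx : x ≠ T.root) : T.pot x (T.parent x) = T.wt x := by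
  unfold pot
  rw [Finset.sum_eq_single x]
  · rw [T.ind_one (T.treeLE_refl x), T.ind_zero (T.not_treeLE_parent hx)]
    norm_num
  · intro y hy hyx
    simp only [Finset.mem_filter, Finset.mem_univ, true_and] at hy
    have : T.ind y x = T.ind y (T.parent x) := by
      by_cases h : treeLE T y x
      · rw [T.ind_one h, T.ind_one (T.treeLE_parent_of_ne h hyx)]
      · rw [T.ind_zero h, T.ind_zero (fun hc => h (T.treeLE_of_parent hc))]
    rw [this]; simp
  · intro hmem
    exact absurd (by simp [hx]) hmem

lemma pot_edge' {x : X} (hx : x ≠ T.root) : T.pot (T.parent x) x = T.wt x := by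
  rw [pot_symm]; exact T.pot_edge hx

lemma pot_eq_treeW {u v : X} (h : 0 < treeW T u v) : T.pot u v = treeW T u v := by
  unfold treeW at h ⊢
  by_cases h1 : u ≠ v ∧ T.parent u = v
  · have hu : u ≠ T.root := by
      intro hr; apply h1.1; subst hr; rw [← h1.2, T.parent_root]
    rw [if_pos h1, ← h1.2, T.pot_edge hu]
  · by_cases h2 : u ≠ v ∧ T.parent v = u
    · have hv : v ≠ T.root := by
        intro hr; apply h2.1; subst hr; rw [← h2.2, T.parent_root]
      rw [if_neg h1, if_pos h2, ← h2.2, T.pot_edge' hv]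
    · rw [if_neg h1, if_neg h2] at h; exact absurd h (lt_irrefl 0)


end WRootedTree
namespace WRootedTree

variable {X : Type*} (T : WRootedTree X) [DecidableEq X] [Fintype X]

lemma pathLen_nonneg : ∀ l : List X, l.Chain' (fun a b => 0 < treeW T a b) →
    0 ≤ pathLen (treeW T) l := by
  intro l
  induction l with
  | nil => intro _; simp [pathLen]
  | cons x t ih =>
    cases t with
    | nil => intro _; simp [pathLen]
    | cons y t' =>
      intro h
      simp only [List.Chain', List.isChain_cons_cons] at h
      show 0 ≤ treeW T x y + pathLen (treeW T) (y :: t')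
      have := ih h.2
      nlinarith [h.1]

lemma walk_lower : ∀ l : List X, ∀ a b : X, IsWalk (treeW T) a b l →
    T.pot a b ≤ pathLen (treeW T) l := by
  intro l
  induction l with
  | nil => intro a b h; exact absurd h.1 (by simp)
  | cons x t ih =>
    cases t with
    | nil =>
      intro a b h
      obtain ⟨h1, h2, _⟩ := h
      simp only [List.head?_cons, Option.some.injEq] at h1
      simp only [List.getLast?_singleton, Option.some.injEq] at h2
      subst h1; subst h2
      rw [T.pot_self]
      simp [pathLen]
    | cons y t' =>
      intro a b h
      obtain ⟨h1, h2, h3⟩ := h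
      simp only [List.head?_cons, Option.some.injEq] at h1
      subst h1
      simp only [List.Chain', List.isChain_cons_cons] at h3
      rw [List.getLast?_cons_cons] at h2
      have hwalk : IsWalk (treeW T) y b (y :: t') := ⟨rfl, h2, h3.2⟩
      have hih := ih y b hwalk
      calc T.pot x b ≤ T.pot x y + T.pot y b := T.pot_triangle x y b
        _ ≤ treeW T x y + pathLen (treeW T) (y :: t') := by
            rw [T.pot_eq_treeW h3.1]; linarith
        _ = pathLen (treeW T) (x :: y :: t') := rfl

lemma walkUp_isWalk (a : X) :
    IsWalk (treeW T) a T.root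
      ((List.range (Nat.find (T.reach a) + 1)).map (fun i => T.parent^[i] a)) := by
  set n := Nat.find (T.reach a) with hn
  refine ⟨?_, ?_, ?_⟩
  · rw [List.range_succ_eq_map]
    simp
  · rw [List.range_succ, List.map_append]
    simp only [List.map_cons, List.map_nil, List.getLast?_concat, Option.some.injEq]
    exact Nat.find_spec (T.reach a)
  · simp only [List.Chain', List.isChain_map]; rw [List.isChain_range_succ]
    intro m hm
    have hmr : T.parent^[m] a ≠ T.root := Nat.find_min (T.reach a) (by omega)
    rw [Function.iterate_succ_apply']
    rw [T.treeW_parent hmr]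
    exact T.wt_pos _ hmr

lemma walk_reverse {a b : X} {l : List X} (h : IsWalk (treeW T) a b l) :
    IsWalk (treeW T) b a l.reverse := by
  obtain ⟨h1, h2, h3⟩ := h
  refine ⟨?_, ?_, ?_⟩
  · rwa [List.head?_reverse]
  · rwa [List.getLast?_reverse]
  · simp only [List.Chain', List.isChain_reverse]
    refine List.IsChain.imp (fun x y hxy => ?_) h3
    show 0 < treeW T y x
    rw [T.treeW_symm]
    exact hxy

lemma walk_append {a b c : X} {l m : List X} (h1 : IsWalk (treeW T) a c l)
    (h2 : IsWalk (treeW T) c b m) : IsWalk (treeW T) a b (l ++ m.tail) := by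
  obtain ⟨hl1, hl2, hl3⟩ := h1
  obtain ⟨hm1, hm2, hm3⟩ := h2
  cases m with
  | nil => exact absurd hm1 (by simp)
  | cons c' t =>
    simp only [List.head?_cons, Option.some.injEq] at hm1
    subst hm1
    cases t with
    | nil =>
      simp only [List.getLast?_singleton, Option.some.injEq] at hm2
      subst hm2
      simpa using ⟨hl1, hl2, hl3⟩
    | cons d t' =>
      rw [List.getLast?_cons_cons] at hm2
      simp only [List.Chain', List.isChain_cons_cons] at hm3
      cases l with
      | nil => exact absurd hl1 (by simp)
      | cons a' s =>
        simp only [List.head?_cons, Option.some.injEq] at hl1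
        subst hl1
        refine ⟨by simp, ?_, ?_⟩
        · rw [List.tail_cons, List.getLast?_append_cons]
          exact hm2
        · simp only [List.Chain', List.tail_cons, List.isChain_append]
          refine ⟨hl3, hm3.2, ?_⟩
          intro x hx y hy
          simp only [List.head?_cons, Option.mem_def, Option.some.injEq] at hy
          subst hy
          have hxc : x = c' := by
            rw [hl2] at hx
            exact (by simpa using hx : c' = x).symm
          subst hxc
          exact hm3.1

lemma walk_exists (a b : X) : ∃ l, IsWalk (treeW T) a b l :=
  ⟨_, T.walk_append (T.walkUp_isWalk a) (T.walk_reverse (T.walkUp_isWalk b))⟩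

lemma gdist_le {a b : X} {l : List X} (h : IsWalk (treeW T) a b l) :
    tdist T a b ≤ pathLen (treeW T) l := by
  refine csInf_le ⟨0, ?_⟩ ⟨l, h, rfl⟩
  rintro r ⟨l', hl', rfl⟩
  exact T.pathLen_nonneg l' hl'.2.2

lemma pot_le_tdist (a b : X) : T.pot a b ≤ tdist T a b := by
  obtain ⟨l, hl⟩ := T.walk_exists a b
  refine le_csInf ⟨_, l, hl, rfl⟩ ?_
  rintro r ⟨l', hl', rfl⟩
  exact T.walk_lower l' a b hl'

lemma tdist_self (a : X) : tdist T a a = 0 := by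
  refine le_antisymm ?_ ?_
  · have : IsWalk (treeW T) a a [a] := ⟨rfl, rfl, List.isChain_singleton _⟩
    simpa [pathLen] using T.gdist_le this
  · have := T.pot_le_tdist a a
    rwa [T.pot_self] at this

lemma tdist_edge {x : X} (hx : x ≠ T.root) : tdist T x (T.parent x) = T.wt x := by
  refine le_antisymm ?_ ?_
  · have hw : IsWalk (treeW T) x (T.parent x) [x, T.parent x] := by
      refine ⟨rfl, rfl, ?_⟩
      simp only [List.Chain', List.isChain_cons_cons, List.isChain_singleton, and_true]
      rw [T.treeW_parent hx]
      exact T.wt_pos x hx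
    have := T.gdist_le hw
    simpa [pathLen, T.treeW_parent hx] using this
  · have := T.pot_le_tdist x (T.parent x)
    rwa [T.pot_edge hx] at this

lemma tdist_edge' {x : X} (hx : x ≠ T.root) : tdist T (T.parent x) x = T.wt x := by
  refine le_antisymm ?_ ?_
  · have hw : IsWalk (treeW T) (T.parent x) x [T.parent x, x] := by
      refine ⟨rfl, rfl, ?_⟩
      simp only [List.Chain', List.isChain_cons_cons, List.isChain_singleton, and_true]
      rw [T.treeW_parent' hx]
      exact T.wt_pos x hx
    have := T.gdist_le hw
    simpa [pathLen, T.treeW_parent' hx] using this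
  · have := T.pot_le_tdist (T.parent x) x
    rwa [T.pot_edge' hx] at this


end WRootedTree


namespace WRootedTree
open Finset
variable {X : Type*} [Fintype X] [DecidableEq X] (T : WRootedTree X) (μ ν : X → ℝ)

noncomputable def gstar : X → X → ℝ := fun a b =>
  if a = b then
    μ a - max (cumul T (μ - ν) a) 0 -
      ∑ c ∈ Finset.univ.filter (fun c => T.parent c = a ∧ c ≠ a),
        max (-(cumul T (μ - ν) c)) 0
  else if T.parent a = b then max (cumul T (μ - ν) a) 0
  else if T.parent b = a then max (-(cumul T (μ - ν) b)) 0
  else 0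

lemma gstar_diag (a : X) :
    gstar T μ ν a a = μ a - max (cumul T (μ - ν) a) 0 -
      ∑ c ∈ Finset.univ.filter (fun c => T.parent c = a ∧ c ≠ a),
        max (-(cumul T (μ - ν) c)) 0 := by
  simp [gstar]

lemma gstar_offdiag {a b : X} (hab : a ≠ b) :
    gstar T μ ν a b = (if T.parent a = b then max (cumul T (μ - ν) a) 0 else 0) +
      (if T.parent b = a then max (-(cumul T (μ - ν) b)) 0 else 0) := by
  unfold gstar
  rw [if_neg hab]
  by_cases h1 : T.parent a = b
  · have h2 := T.no_two_cycle hab h1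
    simp [h1, h2]
  · by_cases h2 : T.parent b = a <;> simp [h1, h2]

lemma gstar_nonneg
    (hcond : ∀ x : X,
      max (cumul T (μ - ν) x) 0 +
          ∑ c ∈ Finset.univ.filter (fun c => T.parent c = x ∧ c ≠ x),
            max (-(cumul T (μ - ν) c)) 0 ≤ μ x) (a b : X) :
    0 ≤ gstar T μ ν a b := by
  by_cases hab : a = b
  · subst hab
    rw [gstar_diag]
    have := hcond a
    linarith
  · rw [gstar_offdiag T μ ν hab]
    have h1 : (0:ℝ) ≤ if T.parent a = b then max (cumul T (μ - ν) a) 0 else 0 := by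
      split_ifs; exacts [le_max_right _ _, le_rfl]
    have h2 : (0:ℝ) ≤ if T.parent b = a then max (-(cumul T (μ - ν) b)) 0 else 0 := by
      split_ifs; exacts [le_max_right _ _, le_rfl]
    linarith

lemma cumul_root_zero (hμ1 : ∑ x, μ x = 1) (hν1 : ∑ x, ν x = 1) :
    cumul T (μ - ν) T.root = 0 := by
  rw [cumul_root]
  simp only [Pi.sub_apply]
  rw [Finset.sum_sub_distrib, hμ1, hν1, sub_self]

lemma kids_eq (a : X) :
    Finset.univ.filter (fun c => T.parent c = a ∧ c ≠ a) =
      (Finset.univ.filter (fun x => x ≠ T.root)).filter (fun c => T.parent c = a) := by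
  ext c
  simp only [mem_filter, mem_univ, true_and]
  constructor
  · rintro ⟨h1, h2⟩
    exact ⟨T.child_ne_root h1 h2, h1⟩
  · rintro ⟨h1, h2⟩
    refine ⟨h2, fun hc => h1 ?_⟩
    rw [← hc] at h2
    exact (T.parent_eq_iff).mp h2

lemma sum_erase_row (a : X) :
    ∑ b ∈ Finset.univ.erase a, gstar T μ ν a b =
      (if a = T.root then 0 else max (cumul T (μ - ν) a) 0) +
      ∑ c ∈ Finset.univ.filter (fun c => T.parent c = a ∧ c ≠ a),
        max (-(cumul T (μ - ν) c)) 0 := by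
  have hcg : ∀ b ∈ Finset.univ.erase a, gstar T μ ν a b =
      (if T.parent a = b then max (cumul T (μ - ν) a) 0 else 0) +
      (if T.parent b = a then max (-(cumul T (μ - ν) b)) 0 else 0) := by
    intro b hb
    exact gstar_offdiag T μ ν (Ne.symm (Finset.mem_erase.mp hb).1)
  rw [Finset.sum_congr rfl hcg, Finset.sum_add_distrib]
  congr 1
  · rw [Finset.sum_ite_eq]
    by_cases ha : a = T.root
    · rw [if_pos ha, if_neg]
      simp only [Finset.mem_erase, Finset.mem_univ, and_true, not_not]
      rw [ha, T.parent_root]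
    · rw [if_neg ha, if_pos]
      simp only [Finset.mem_erase, Finset.mem_univ, and_true]
      intro hc
      exact ha ((T.parent_eq_iff).mp hc)
  · rw [← Finset.sum_filter]
    apply Finset.sum_congr _ (fun _ _ => rfl)
    ext c
    simp only [mem_filter, mem_erase, mem_univ, true_and, and_true]
    tauto

lemma gstar_row (hμ1 : ∑ x, μ x = 1) (hν1 : ∑ x, ν x = 1) (a : X) :
    ∑ b, gstar T μ ν a b = μ a := by
  rw [← Finset.add_sum_erase _ _ (Finset.mem_univ a), sum_erase_row, gstar_diag]
  by_cases ha : a = T.root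
  · rw [if_pos ha, ha, cumul_root_zero T μ ν hμ1 hν1]
    simp
  · rw [if_neg ha]; ring


lemma sum_erase_col (b : X) :
    ∑ a ∈ Finset.univ.erase b, gstar T μ ν a b =
      (if b = T.root then 0 else max (-(cumul T (μ - ν) b)) 0) +
      ∑ c ∈ Finset.univ.filter (fun c => T.parent c = b ∧ c ≠ b),
        max (cumul T (μ - ν) c) 0 := by
  have hcg : ∀ a ∈ Finset.univ.erase b, gstar T μ ν a b =
      (if T.parent b = a then max (-(cumul T (μ - ν) b)) 0 else 0) +
      (if T.parent a = b then max (cumul T (μ - ν) a) 0 else 0) := by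
    intro a ha
    rw [gstar_offdiag T μ ν (Finset.mem_erase.mp ha).1]
    ring
  rw [Finset.sum_congr rfl hcg, Finset.sum_add_distrib]
  congr 1
  · rw [Finset.sum_ite_eq]
    by_cases hb : b = T.root
    · rw [if_pos hb, if_neg]
      simp only [Finset.mem_erase, Finset.mem_univ, and_true, not_not]
      rw [hb, T.parent_root]
    · rw [if_neg hb, if_pos]
      simp only [Finset.mem_erase, Finset.mem_univ, and_true]
      intro hc
      exact hb ((T.parent_eq_iff).mp hc)
  · rw [← Finset.sum_filter]
    apply Finset.sum_congr _ (fun _ _ => rfl)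
    ext c
    simp only [mem_filter, mem_erase, mem_univ, true_and, and_true]
    tauto

lemma gstar_col (hμ1 : ∑ x, μ x = 1) (hν1 : ∑ x, ν x = 1) (b : X) :
    ∑ a, gstar T μ ν a b = ν b := by
  rw [← Finset.add_sum_erase _ _ (Finset.mem_univ b), sum_erase_col, gstar_diag]
  have hce := cumul_eq T (μ - ν) b
  have hb : (μ - ν) b = μ b - ν b := rfl
  rw [hb] at hce
  have h1 : max (cumul T (μ - ν) b) 0 - max (-(cumul T (μ - ν) b)) 0
      = cumul T (μ - ν) b := max_zero_sub_max_neg_zero_eq_self _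
  have h2 : ∑ c ∈ Finset.univ.filter (fun c => T.parent c = b ∧ c ≠ b),
        max (cumul T (μ - ν) c) 0 -
      ∑ c ∈ Finset.univ.filter (fun c => T.parent c = b ∧ c ≠ b),
        max (-(cumul T (μ - ν) c)) 0 =
      ∑ c ∈ Finset.univ.filter (fun c => T.parent c = b ∧ c ≠ b),
        cumul T (μ - ν) c := by
    rw [← Finset.sum_sub_distrib]
    exact Finset.sum_congr rfl fun c _ => max_zero_sub_max_neg_zero_eq_self _
  by_cases hbr : b = T.root
  · have h0 : cumul T (μ - ν) b = 0 := by rw [hbr]; exact cumul_root_zero T μ ν hμ1 hν1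
    rw [if_pos hbr, h0]
    rw [h0] at hce
    simp only [max_self, neg_zero]
    linarith
  · rw [if_neg hbr]
    linarith


lemma gstar_inner_cost (hμ1 : ∑ x, μ x = 1) (hν1 : ∑ x, ν x = 1) (a : X) :
    ∑ b, tdist T a b * gstar T μ ν a b =
      (if a = T.root then 0 else T.wt a * max (cumul T (μ - ν) a) 0) +
      ∑ c ∈ Finset.univ.filter (fun c => T.parent c = a ∧ c ≠ a),
        T.wt c * max (-(cumul T (μ - ν) c)) 0 := by
  rw [← Finset.sum_erase Finset.univ (a := a) (by rw [T.tdist_self, zero_mul])]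
  have hcg : ∀ b ∈ Finset.univ.erase a, tdist T a b * gstar T μ ν a b =
      (if T.parent a = b then T.wt a * max (cumul T (μ - ν) a) 0 else 0) +
      (if T.parent b = a then T.wt b * max (-(cumul T (μ - ν) b)) 0 else 0) := by
    intro b hb
    have hba : b ≠ a := (Finset.mem_erase.mp hb).1
    rw [gstar_offdiag T μ ν (Ne.symm hba)]
    by_cases hpa : T.parent a = b
    · have h2 := T.no_two_cycle (Ne.symm hba) hpa
      have har : a ≠ T.root := by
        intro hr; apply hba; rw [← hpa, hr, T.parent_root]
      rw [if_pos hpa, if_neg h2, if_pos hpa, if_neg h2, ← hpa, T.tdist_edge har]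
      ring
    · by_cases hpb : T.parent b = a
      · have hbr : b ≠ T.root := by
          intro hr; apply hba; rw [← hpb, hr, T.parent_root]
        rw [if_neg hpa, if_pos hpb, if_neg hpa, if_pos hpb, ← hpb, T.tdist_edge' hbr]
        ring
      · rw [if_neg hpa, if_neg hpb, if_neg hpa, if_neg hpb]
        ring
  rw [Finset.sum_congr rfl hcg, Finset.sum_add_distrib]
  congr 1
  · rw [Finset.sum_ite_eq]
    by_cases ha : a = T.root
    · rw [if_pos ha, if_neg]
      simp only [Finset.mem_erase, Finset.mem_univ, and_true, not_not]
      rw [ha, T.parent_root]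
    · rw [if_neg ha, if_pos]
      simp only [Finset.mem_erase, Finset.mem_univ, and_true]
      intro hc
      exact ha ((T.parent_eq_iff).mp hc)
  · rw [← Finset.sum_filter]
    apply Finset.sum_congr _ (fun _ _ => rfl)
    ext c
    simp only [mem_filter, mem_erase, mem_univ, true_and, and_true]
    tauto

lemma gstar_cost (hμ1 : ∑ x, μ x = 1) (hν1 : ∑ x, ν x = 1) :
    ∑ a, ∑ b, tdist T a b * gstar T μ ν a b =
      ∑ x ∈ Finset.univ.filter (fun x => x ≠ T.root),
        T.wt x * |cumul T (μ - ν) x| := by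
  rw [Finset.sum_congr rfl (fun a _ => gstar_inner_cost T μ ν hμ1 hν1 a),
    Finset.sum_add_distrib]
  have e1 : ∑ a : X, (if a = T.root then 0 else T.wt a * max (cumul T (μ - ν) a) 0)
      = ∑ x ∈ Finset.univ.filter (fun x => x ≠ T.root),
          T.wt x * max (cumul T (μ - ν) x) 0 := by
    rw [Finset.sum_filter]
    exact Finset.sum_congr rfl fun a _ => (ite_not _ _ _).symm
  have e2 : ∑ a : X, ∑ c ∈ Finset.univ.filter (fun c => T.parent c = a ∧ c ≠ a),
        T.wt c * max (-(cumul T (μ - ν) c)) 0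
      = ∑ x ∈ Finset.univ.filter (fun x => x ≠ T.root),
          T.wt x * max (-(cumul T (μ - ν) x)) 0 := by
    rw [Finset.sum_congr rfl (fun a (_ : a ∈ Finset.univ) => by rw [kids_eq T])]
    exact Finset.sum_fiberwise_of_maps_to (fun x _ => Finset.mem_univ _) _
  rw [e1, e2, ← Finset.sum_add_distrib]
  refine Finset.sum_congr rfl fun x _ => ?_
  rw [← mul_add, max_zero_add_max_neg_zero_eq_abs_self]

lemma rhs_cost :
    ∑ x ∈ Finset.univ.filter (fun x => x ≠ T.root),
        tdist T x (T.parent x) * |cumul T (μ - ν) x| =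
      ∑ x ∈ Finset.univ.filter (fun x => x ≠ T.root),
        T.wt x * |cumul T (μ - ν) x| := by
  refine Finset.sum_congr rfl fun x hx => ?_
  rw [T.tdist_edge (Finset.mem_filter.mp hx).2]

lemma cost_lower (γ' : X → X → ℝ) (h0 : ∀ a b, 0 ≤ γ' a b)
    (h1 : ∀ a, ∑ b, γ' a b = μ a) (h2 : ∀ b, ∑ a, γ' a b = ν b) :
    ∑ x ∈ Finset.univ.filter (fun x => x ≠ T.root),
        T.wt x * |cumul T (μ - ν) x| ≤
      ∑ a, ∑ b, tdist T a b * γ' a b := by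
  classical
  have step1 : ∑ a, ∑ b, T.pot a b * γ' a b ≤ ∑ a, ∑ b, tdist T a b * γ' a b :=
    Finset.sum_le_sum fun a _ => Finset.sum_le_sum fun b _ =>
      mul_le_mul_of_nonneg_right (T.pot_le_tdist a b) (h0 a b)
  refine le_trans ?_ step1
  have swap : ∑ a, ∑ b, T.pot a b * γ' a b
      = ∑ x ∈ Finset.univ.filter (fun x => x ≠ T.root),
          T.wt x * (∑ a, ∑ b, |T.ind x a - T.ind x b| * γ' a b) := by
    unfold pot
    simp_rw [Finset.sum_mul, mul_assoc]
    calc ∑ a, ∑ b, ∑ x ∈ Finset.univ.filter (· ≠ T.root),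
            T.wt x * (|T.ind x a - T.ind x b| * γ' a b)
        = ∑ a, ∑ x ∈ Finset.univ.filter (· ≠ T.root), ∑ b,
            T.wt x * (|T.ind x a - T.ind x b| * γ' a b) :=
          Finset.sum_congr rfl fun a _ => Finset.sum_comm
      _ = ∑ x ∈ Finset.univ.filter (· ≠ T.root), ∑ a, ∑ b,
            T.wt x * (|T.ind x a - T.ind x b| * γ' a b) := Finset.sum_comm
      _ = ∑ x ∈ Finset.univ.filter (fun x => x ≠ T.root),
            T.wt x * (∑ a, ∑ b, |T.ind x a - T.ind x b| * γ' a b) := by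
          simp_rw [← Finset.mul_sum]
  rw [swap]
  refine Finset.sum_le_sum fun x hx => ?_
  have hxr : x ≠ T.root := (Finset.mem_filter.mp hx).2
  refine mul_le_mul_of_nonneg_left ?_ (le_of_lt (T.wt_pos x hxr))
  have key : ∑ a, ∑ b, (T.ind x a - T.ind x b) * γ' a b = cumul T (μ - ν) x := by
    have e1 : ∑ a : X, ∑ b, T.ind x a * γ' a b = ∑ y, T.ind x y * μ y :=
      Finset.sum_congr rfl fun a _ => by rw [← Finset.mul_sum, h1 a]
    have e2 : ∑ a : X, ∑ b, T.ind x b * γ' a b = ∑ y, T.ind x y * ν y := by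
      rw [Finset.sum_comm]
      exact Finset.sum_congr rfl fun b _ => by rw [← Finset.mul_sum, h2 b]
    calc ∑ a, ∑ b, (T.ind x a - T.ind x b) * γ' a b
        = ∑ a, ∑ b, (T.ind x a * γ' a b - T.ind x b * γ' a b) := by
          simp_rw [sub_mul]
      _ = (∑ a : X, ∑ b, T.ind x a * γ' a b) - ∑ a : X, ∑ b, T.ind x b * γ' a b := by
          simp_rw [← Finset.sum_sub_distrib]
      _ = (∑ y, T.ind x y * μ y) - ∑ y, T.ind x y * ν y := by rw [e1, e2]
      _ = ∑ y, T.ind x y * (μ y - ν y) := by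
          rw [← Finset.sum_sub_distrib]
          exact Finset.sum_congr rfl fun y _ => (mul_sub _ _ _).symm
      _ = cumul T (μ - ν) x := by
          rw [cumul]
          refine Finset.sum_congr rfl fun y _ => ?_
          rw [Set.indicator_apply]
          by_cases h : treeLE T x y
          · rw [T.ind_one h, one_mul, if_pos (show y ∈ {y' | treeLE T x y'} from h)]
            rfl
          · rw [T.ind_zero h, zero_mul, if_neg (show y ∉ {y' | treeLE T x y'} from h)]
  rw [← key]
  calc |∑ a, ∑ b, (T.ind x a - T.ind x b) * γ' a b|
      ≤ ∑ a, |∑ b, (T.ind x a - T.ind x b) * γ' a b| := Finset.abs_sum_le_sum_abs _ _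
    _ ≤ ∑ a, ∑ b, |(T.ind x a - T.ind x b) * γ' a b| :=
        Finset.sum_le_sum fun a _ => Finset.abs_sum_le_sum_abs _ _
    _ = ∑ a, ∑ b, |T.ind x a - T.ind x b| * γ' a b := by
        refine Finset.sum_congr rfl fun a _ => Finset.sum_congr rfl fun b _ => ?_
        rw [abs_mul, abs_of_nonneg (h0 a b)]

end WRootedTree

/-- The explicit coupling γ* on a rooted tree is feasible and optimal: its transport
cost equals $∑_{x ≠ x₀} d(x,x⁺)|Ξ(x)|$, which is the Kantorovich distance. -/
theorem tree_optimal_coupling {X : Type*} [Fintype X] [DecidableEq X] (T : WRootedTree X)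
    (μ ν : X → ℝ) (hμ0 : ∀ x, 0 ≤ μ x) (hμ1 : ∑ x, μ x = 1)
    (hν0 : ∀ x, 0 ≤ ν x) (hν1 : ∑ x, ν x = 1)
    (hcond : ∀ x : X,
      max (cumul T (μ - ν) x) 0 +
          ∑ c ∈ Finset.univ.filter (fun c => T.parent c = x ∧ c ≠ x),
            max (-(cumul T (μ - ν) c)) 0 ≤ μ x) :
    ∀ γ : X → X → ℝ,
      (γ = fun a b =>
        if a = b then
          μ a - max (cumul T (μ - ν) a) 0 -
            ∑ c ∈ Finset.univ.filter (fun c => T.parent c = a ∧ c ≠ a),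
              max (-(cumul T (μ - ν) c)) 0
        else if T.parent a = b then max (cumul T (μ - ν) a) 0
        else if T.parent b = a then max (-(cumul T (μ - ν) b)) 0
        else 0) →
      (∀ a b, 0 ≤ γ a b) ∧
      (∀ a, ∑ b, γ a b = μ a) ∧
      (∀ b, ∑ a, γ a b = ν b) ∧
      (∑ a, ∑ b, tdist T a b * γ a b =
        ∑ x ∈ Finset.univ.filter (fun x => x ≠ T.root),
          tdist T x (T.parent x) * |cumul T (μ - ν) x|) ∧
      IsLeast {r | ∃ γ' : X → X → ℝ, (∀ a b, 0 ≤ γ' a b) ∧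
          (∀ a, ∑ b, γ' a b = μ a) ∧ (∀ b, ∑ a, γ' a b = ν b) ∧
          r = ∑ a, ∑ b, tdist T a b * γ' a b}
        (∑ a, ∑ b, tdist T a b * γ a b) := by
  intro γ hγ
  have hγ' : γ = WRootedTree.gstar T μ ν := hγ
  rw [hγ']
  refine ⟨WRootedTree.gstar_nonneg T μ ν hcond,
    WRootedTree.gstar_row T μ ν hμ1 hν1,
    WRootedTree.gstar_col T μ ν hμ1 hν1, ?_, ?_, ?_⟩
  · rw [WRootedTree.gstar_cost T μ ν hμ1 hν1]
    exact (WRootedTree.rhs_cost T μ ν).symm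
  · exact ⟨WRootedTree.gstar T μ ν, WRootedTree.gstar_nonneg T μ ν hcond,
      WRootedTree.gstar_row T μ ν hμ1 hν1,
      WRootedTree.gstar_col T μ ν hμ1 hν1, rfl⟩
  · rintro r ⟨γ', p0, p1, p2, rfl⟩
    rw [WRootedTree.gstar_cost T μ ν hμ1 hν1]
    exact WRootedTree.cost_lower T μ ν γ' p0 p1 p2
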